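/- arXiv:1910.00777 — 7 statements merged into one kernel-verified Lean document; each statement's English description precedes it below -/
import Mathlib

section
/- Let p be an odd prime and let S ⊆ {0,…,p−1} be nonempty with |S| < p. Then the p-clock sum f(m) = (Σ_{t∈S} ((m+t) mod p)) mod 2, as a function ℕ → ℤ/2ℤ, has minimal period exactly p (in particular, f is not constant). -/
/-!
Moving from `m` to `m + 1` advances each of the `#S` clocks by one, except a clock showing `p - 1`,
which drops to `0`. If the parity of the sum were `1`-periodic, then taking `m = p - 1 - s` with
`s ∉ S` (no clock wraps) shows `#S` even, and with `s ∈ S` (exactly one clock wraps) shows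
`#S ≡ p [MOD 2]`; so `p = 2` and `#S = 1`, absurd. A period `b < p` is coprime to `p`, so together
with the period `p` it would give the period `gcd b p = 1`.
-/

open Finset Function

theorem Function.Periodic.nat_gcd {α : Type*} {f : ℕ → α} {a b : ℕ}
    (ha : Periodic f a) (hb : Periodic f b) : Periodic f (a.gcd b) := by
  obtain rfl | hb0 := Nat.eq_zero_or_pos b
  · rwa [Nat.gcd_zero_right]
  obtain hg | hg := (Nat.gcd_le_right a hb0).eq_or_lt
  · rwa [hg]
  obtain ⟨x, -, hx⟩ := Nat.exists_mul_mod_eq_gcd hg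
  have hbezout : a.gcd b + a * x / b * b = x * a := by
    rw [← hx, mul_comm _ b, mul_comm x a, Nat.mod_add_div]
  intro m
  calc f (m + a.gcd b) = f (m + a.gcd b + a * x / b * b) := (hb.nat_mul _ _).symm
    _ = f (m + x * a) := by rw [add_assoc, hbezout]
    _ = f m := ha.nat_mul x m

namespace Nat

theorem add_one_mod_add_ite {n p : ℕ} (hp : 0 < p) :
    (n + 1) % p + (if n % p = p - 1 then p else 0) = n % p + 1 := by
  have hlt := Nat.mod_lt n hp
  rw [← (Nat.mod_modEq n p).add_right 1]
  split_ifs with h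
  · rw [h, Nat.sub_add_cancel hp, Nat.mod_self, zero_add]
  · rw [Nat.mod_eq_of_lt (by omega), add_zero]

theorem sub_one_sub_add_mod_eq_sub_one_iff {p s t : ℕ} (hs : s < p) (ht : t < p) :
    (p - 1 - s + t) % p = p - 1 ↔ t = s := by
  obtain hts | hst := le_or_gt t s
  · rw [Nat.mod_eq_of_lt (by omega)]; omega
  · rw [show p - 1 - s + t = t - s - 1 + p by omega, Nat.add_mod_right, Nat.mod_eq_of_lt (by omega)]
    omega

end Nat

def clockSum (p : ℕ) (S : Finset ℕ) (m : ℕ) : ℕ := ∑ t ∈ S, (m + t) % p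

theorem clockSum_periodic (p : ℕ) (S : Finset ℕ) : Periodic (clockSum p S) p := fun m =>
  sum_congr rfl fun t _ => by rw [add_right_comm, Nat.add_mod_right]

theorem clockSum_add_one {p : ℕ} (hp : 0 < p) (S : Finset ℕ) (m : ℕ) :
    clockSum p S (m + 1) + p * #{t ∈ S | (m + t) % p = p - 1} = clockSum p S m + #S := by
  rw [card_filter, card_eq_sum_ones, mul_sum]
  simp only [clockSum, mul_ite, mul_one, mul_zero, ← sum_add_distrib, add_right_comm m 1]
  exact sum_congr rfl fun t _ => Nat.add_one_mod_add_ite hp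

theorem clockSum_sub_one_sub_add_one {p s : ℕ} {S : Finset ℕ} (hS : S ⊆ range p) (hs : s < p) :
    clockSum p S (p - 1 - s + 1) + (if s ∈ S then p else 0) = clockSum p S (p - 1 - s) + #S := by
  have hwrap : {t ∈ S | (p - 1 - s + t) % p = p - 1} = {t ∈ S | t = s} :=
    filter_congr fun t ht => Nat.sub_one_sub_add_mod_eq_sub_one_iff hs (mem_range.mp (hS ht))
  rw [← clockSum_add_one (by omega), hwrap, filter_eq']
  split_ifs <;> simp

theorem card_modEq_of_periodic_one {p s : ℕ} {S : Finset ℕ} (hS : S ⊆ range p) (hs : s < p)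
    (hper : Periodic (fun m => clockSum p S m % 2) 1) :
    (if s ∈ S then p else 0) ≡ #S [MOD 2] := by
  have h : clockSum p S (p - 1 - s) + (if s ∈ S then p else 0)
      ≡ clockSum p S (p - 1 - s) + #S [MOD 2] := by
    rw [← clockSum_sub_one_sub_add_one hS hs]
    exact Nat.ModEq.add_right _ (hper (p - 1 - s)).symm
  exact Nat.ModEq.add_left_cancel' _ h

theorem clockSum_not_periodic_one {p : ℕ} (hp : p.Prime) {S : Finset ℕ} (hS : S ⊆ range p)
    (hne : S.Nonempty) (hcard : #S < p) : ¬ Periodic (fun m => clockSum p S m % 2) 1 := by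
  intro hper
  obtain ⟨s, hsS⟩ := hne
  obtain ⟨s', hs', hs'S⟩ := exists_of_ssubset (hS.ssubset_of_ne (by rintro rfl; simp at hcard))
  have hin := card_modEq_of_periodic_one hS (mem_range.mp (hS hsS)) hper
  have hout := card_modEq_of_periodic_one hS (mem_range.mp hs') hper
  rw [if_pos hsS] at hin
  rw [if_neg hs'S] at hout
  have hp2 : p = 2 := hp.even_iff.mp (Nat.even_iff.mpr (hin.trans hout.symm))
  have hS1 : #S = 1 := by have := card_pos.mpr ⟨s, hsS⟩; omega
  rw [hS1] at hout
  exact absurd hout (by decide)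

theorem stmt_12_general (p : ℕ) (hp : p.Prime)
    (S : Finset ℕ) (hS : S ⊆ Finset.range p) (hne : S.Nonempty)
    (hcard : S.card < p) :
    (∀ m : ℕ, ((∑ t ∈ S, ((m + p) + t) % p) % 2) = ((∑ t ∈ S, (m + t) % p) % 2)) ∧
    (∀ b, 0 < b →
      (∀ m : ℕ, ((∑ t ∈ S, ((m + b) + t) % p) % 2) = ((∑ t ∈ S, (m + t) % p) % 2)) →
      p ≤ b) := by
  have hperiodic : Periodic (fun m => clockSum p S m % 2) p :=
    (clockSum_periodic p S).comp (· % 2)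
  refine ⟨hperiodic, fun b hb hper => ?_⟩
  by_contra! hbp
  have hcop : b.gcd p = 1 := (Nat.coprime_of_lt_prime hb.ne' hbp hp).symm
  have h1 := (show Periodic (fun m => clockSum p S m % 2) b from hper).nat_gcd hperiodic
  rw [hcop] at h1
  exact clockSum_not_periodic_one hp hS hne hcard h1

theorem stmt_12 (p : ℕ) (hp : p.Prime) (hodd : Odd p)
    (S : Finset ℕ) (hS : S ⊆ Finset.range p) (hne : S.Nonempty)
    (hcard : S.card < p) :
    (∀ m : ℕ, ((∑ t ∈ S, ((m + p) + t) % p) % 2) = ((∑ t ∈ S, (m + t) % p) % 2)) ∧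
    (∀ b, 0 < b →
      (∀ m : ℕ, ((∑ t ∈ S, ((m + b) + t) % p) % 2) = ((∑ t ∈ S, (m + t) % p) % 2)) →
      p ≤ b) :=
  stmt_12_general p hp S hS hne hcard
end

section
/- Let p be a prime with p = 2 or p ≡ 3 (mod 4), and let S, T ⊆ {0,…,p−1} with S ≠ T. Then the functions f(m) = (Σ_{s∈S} ((m+s) mod p)) mod 2 and g(m) = (Σ_{t∈T} ((m+t) mod p)) mod 2 are not equal as functions ℕ → ℤ/2ℤ. -/
lemma step_term (p m t : ℕ) (hp : 1 < p) (ht : t < p) :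
    (m + 1 + t) % p + (if (m + t) % p = p - 1 then p else 0) = (m + t) % p + 1 := by
  have hlt : (m + t) % p < p := Nat.mod_lt _ (by omega)
  have h1 : (m + 1 + t) % p = ((m + t) % p + 1) % p := by
    rw [show m + 1 + t = (m + t) + 1 by ring]
    conv_lhs => rw [Nat.add_mod]
    rw [Nat.mod_eq_of_lt hp]
  by_cases hc : (m + t) % p = p - 1
  · rw [if_pos hc, h1, hc]
    have : p - 1 + 1 = p := by omega
    rw [this, Nat.mod_self]
    omega
  · rw [if_neg hc, h1, Nat.mod_eq_of_lt (by omega)]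

lemma uniq_shift (p t0 t : ℕ) (h0 : t0 < p) (ht : t < p) :
    (p - 1 - t0 + t) % p = p - 1 ↔ t = t0 := by
  constructor
  · intro h
    have ha : p - 1 - t0 + t < 2 * p := by omega
    by_cases hlt : p - 1 - t0 + t < p
    · rw [Nat.mod_eq_of_lt hlt] at h; omega
    · rw [Nat.mod_eq_sub_mod (by omega), Nat.mod_eq_of_lt (by omega)] at h
      omega
  · intro h
    subst h
    rw [Nat.mod_eq_of_lt (by omega)]
    omega

lemma clock_ne_zero (p : ℕ) (hp : p.Prime) (h4 : p = 2 ∨ p % 4 = 3)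
    (D : Finset ℕ) (hD : D ⊆ Finset.range p) (hne : D.Nonempty) :
    ¬ ∀ m : ℕ, (∑ t ∈ D, (m + t) % p) % 2 = 0 := by
  intro h
  have hp1 : 1 < p := hp.one_lt
  have key : ∀ m, (((D.filter (fun t => (m + t) % p = p - 1)).card) * p) % 2
      = D.card % 2 := by
    intro m
    have hsum : (∑ t ∈ D, (m + 1 + t) % p)
        + (D.filter (fun t => (m + t) % p = p - 1)).card * p
        = (∑ t ∈ D, (m + t) % p) + D.card := by
      have hterm : ∀ t ∈ D, (m + 1 + t) % p + (if (m + t) % p = p - 1 then p else 0)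
          = (m + t) % p + 1 := fun t htD =>
        step_term p m t hp1 (Finset.mem_range.mp (hD htD))
      have := Finset.sum_congr rfl hterm
      rw [Finset.sum_add_distrib, Finset.sum_add_distrib, ← Finset.sum_filter,
        Finset.sum_const, Finset.sum_const, smul_eq_mul, smul_eq_mul, mul_one] at this
      omega
    have h1 := h m
    have h2 := h (m + 1)
    omega
  have hcard : D.card ≤ p := by
    have := Finset.card_le_card hD
    simpa using this
  rcases eq_or_lt_of_le hcard with heq | hlt
  · -- D = range p, constant 1 case
    have hDeq : D = Finset.range p := by
      apply Finset.eq_of_subset_of_card_le hD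
      simp [heq]
    have h0 := h 0
    rw [hDeq] at h0
    have hsum0 : (∑ t ∈ Finset.range p, (0 + t) % p) = ∑ t ∈ Finset.range p, t := by
      apply Finset.sum_congr rfl
      intro t htm
      rw [zero_add, Nat.mod_eq_of_lt (Finset.mem_range.mp htm)]
    rw [hsum0] at h0
    have hgauss : (∑ t ∈ Finset.range p, t) * 2 = p * (p - 1) :=
      Finset.sum_range_id_mul_two p
    rcases h4 with h2 | h3
    · subst h2
      norm_num [Finset.sum_range_succ] at h0
    · obtain ⟨k, hk⟩ : ∃ k, p = 4 * k + 3 := ⟨p / 4, by omega⟩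
      have hprod : (∑ t ∈ Finset.range p, t) = (4 * k + 3) * (2 * k + 1) := by
        have h2 : (∑ t ∈ Finset.range p, t) * 2 = ((4 * k + 3) * (2 * k + 1)) * 2 := by
          rw [hgauss, hk]
          have h3 : 4 * k + 3 - 1 = 4 * k + 2 := by omega
          rw [h3]; ring
        exact Nat.eq_of_mul_eq_mul_right (by norm_num) h2
      rw [hprod, Nat.mul_mod] at h0
      have e1 : (4 * k + 3) % 2 = 1 := by omega
      have e2 : (2 * k + 1) % 2 = 1 := by omega
      rw [e1, e2] at h0
      omega
  · -- D proper subset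
    obtain ⟨t0, ht0⟩ := hne
    have ht0p : t0 < p := Finset.mem_range.mp (hD ht0)
    have hfilter1 : D.filter (fun t => (p - 1 - t0 + t) % p = p - 1) = {t0} := by
      ext t
      simp only [Finset.mem_filter, Finset.mem_singleton]
      constructor
      · rintro ⟨htD, hpred⟩
        exact (uniq_shift p t0 t ht0p (Finset.mem_range.mp (hD htD))).mp hpred
      · intro h'
        rw [h']
        exact ⟨ht0, (uniq_shift p t0 t0 ht0p ht0p).mpr rfl⟩
    have e1 := key (p - 1 - t0)
    rw [hfilter1, Finset.card_singleton, one_mul] at e1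
    obtain ⟨t1, ht1r, ht1⟩ : ∃ t1 ∈ Finset.range p, t1 ∉ D := by
      have hss : D ⊂ Finset.range p := by
        refine hD.ssubset_of_ne ?_
        intro hcontra
        rw [hcontra, Finset.card_range] at hlt
        omega
      exact Finset.exists_of_ssubset hss
    have ht1p : t1 < p := Finset.mem_range.mp ht1r
    have hfilter0 : D.filter (fun t => (p - 1 - t1 + t) % p = p - 1) = ∅ := by
      rw [Finset.filter_eq_empty_iff]
      intro t htD hpred
      have : t = t1 := (uniq_shift p t1 t ht1p (Finset.mem_range.mp (hD htD))).mp hpred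
      exact ht1 (this ▸ htD)
    have e0 := key (p - 1 - t1)
    rw [hfilter0, Finset.card_empty, Nat.zero_mul] at e0
    -- p % 2 = D.card % 2 = 0, so p = 2, D.card even, 1 ≤ D.card < 2
    have hpeven : p % 2 = 0 := by omega
    have hp2 : p = 2 := (Nat.Prime.even_iff hp).mp (Nat.even_iff.mpr hpeven)
    have hpos : 0 < D.card := Finset.card_pos.mpr ⟨t0, ht0⟩
    omega

theorem stmt_13 (p : ℕ) (hp : p.Prime) (h4 : p = 2 ∨ p % 4 = 3)
    (S T : Finset ℕ) (hS : S ⊆ Finset.range p) (hT : T ⊆ Finset.range p)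
    (hST : S ≠ T) :
    ¬ ∀ m : ℕ, (∑ s ∈ S, (m + s) % p) % 2 = (∑ t ∈ T, (m + t) % p) % 2 := by
  intro h
  set D := (S \ T) ∪ (T \ S) with hDdef
  have hDsub : D ⊆ Finset.range p :=
    Finset.union_subset (Finset.sdiff_subset.trans hS) (Finset.sdiff_subset.trans hT)
  have hDne : D.Nonempty := by
    rw [Finset.nonempty_iff_ne_empty]
    intro hemp
    rw [hDdef, Finset.union_eq_empty] at hemp
    exact hST (Finset.Subset.antisymm
      (Finset.sdiff_eq_empty_iff_subset.mp hemp.1)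
      (Finset.sdiff_eq_empty_iff_subset.mp hemp.2))
  apply clock_ne_zero p hp h4 D hDsub hDne
  intro m
  have hdisj : Disjoint (S \ T) (T \ S) := disjoint_sdiff_sdiff
  rw [hDdef, Finset.sum_union hdisj]
  have hS' : (∑ t ∈ S \ (S ∩ T), (m + t) % p) + (∑ t ∈ S ∩ T, (m + t) % p)
      = ∑ t ∈ S, (m + t) % p := Finset.sum_sdiff Finset.inter_subset_left
  have hT' : (∑ t ∈ T \ (S ∩ T), (m + t) % p) + (∑ t ∈ S ∩ T, (m + t) % p)
      = ∑ t ∈ T, (m + t) % p := Finset.sum_sdiff Finset.inter_subset_right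
  rw [Finset.sdiff_inter_self_left] at hS'
  rw [Finset.sdiff_inter_self_right] at hT'
  have hm := h m
  omega
end

section
/- Let p ≡ 3 (mod 4) be prime. The subgroup of the abelian group of functions ℕ → ℤ/2ℤ (under pointwise addition) generated by the p projected prime clocks [p,0],…,[p,p−1] has order exactly 2^p, and is isomorphic to (ℤ/2ℤ)^p. -/
theorem parity (p m : ℕ) (hp : p.Prime) (hodd : p % 2 = 1) :
    (((m % p : ℕ) : ZMod 2) + (((m+1) % p : ℕ) : ZMod 2))
      = if m % p = p - 1 then 0 else 1 := by
  have hp1 : 1 < p := hp.one_lt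
  have h1 : (m+1) % p = (m % p + 1) % p := by
    conv_lhs => rw [Nat.add_mod, Nat.mod_eq_of_lt hp1]
  rw [h1]
  have hr : m % p < p := Nat.mod_lt m (by omega)
  set r := m % p with hrdef
  clear_value r
  split_ifs with h
  · subst h
    have h2 : (p - 1 + 1) % p = 0 := by rw [Nat.sub_add_cancel (by omega)]; exact Nat.mod_self p
    rw [h2]
    have h3 : (p-1) = 2 * ((p-1)/2) := by omega
    rw [h3]
    push_cast
    rw [show ((2:ZMod 2)) = 0 by decide]
    ring
  · rw [Nat.mod_eq_of_lt (by omega)]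
    push_cast
    rw [show ((1:ZMod 2)) = 1 by rfl]
    have : (r : ZMod 2) + (r : ZMod 2) = 0 := by
      rw [← two_mul, show ((2:ZMod 2)) = 0 by decide]; ring
    linear_combination this

theorem indep (p : ℕ) (hp : p.Prime) (h4 : p % 4 = 3) :
    LinearIndependent (ZMod 2)
      (fun t : Fin p => fun m : ℕ => (((m + (t:ℕ)) % p : ℕ) : ZMod 2)) := by
  have hp1 : 1 < p := hp.one_lt
  have hodd : p % 2 = 1 := by omega
  rw [Fintype.linearIndependent_iff]
  intro g H i
  have Hm : ∀ m : ℕ, ∑ t : Fin p, g t * (((m + (t:ℕ)) % p : ℕ) : ZMod 2) = 0 := by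
    intro m
    have := congrFun H m
    simpa [Finset.sum_apply] using this
  have hconst : ∀ t₀ : Fin p, g t₀ = ∑ t : Fin p, g t := by
    intro t₀
    set m := p - 1 - (t₀ : ℕ) with hm
    have key : ∀ t : Fin p, (m + (t:ℕ)) % p = p - 1 ↔ t = t₀ := by
      intro t
      have ht : (t:ℕ) < p := t.isLt
      have ht₀ : (t₀:ℕ) < p := t₀.isLt
      by_cases hle : (t:ℕ) ≤ (t₀:ℕ)
      · rw [Nat.mod_eq_of_lt (by omega)]
        simp only [Fin.ext_iff]; omega
      · have h2 : m + (t:ℕ) = p + ((t:ℕ) - (t₀:ℕ) - 1) := by omega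
        rw [h2, Nat.add_mod_left, Nat.mod_eq_of_lt (by omega)]
        simp only [Fin.ext_iff]; omega
    have hsum : ∑ t : Fin p,
        g t * ((((m + (t:ℕ)) % p : ℕ) : ZMod 2) + ((((m + (t:ℕ) + 1) % p : ℕ)) : ZMod 2)) = 0 := by
      simp only [mul_add, Finset.sum_add_distrib]
      rw [Hm m]
      have : ∀ t : Fin p, m + (t:ℕ) + 1 = (m+1) + (t:ℕ) := by intro t; ring
      simp only [this]
      rw [Hm (m+1)]
      ring
    have e : ∀ t : Fin p, (((m + (t:ℕ)) % p : ℕ) : ZMod 2) + ((((m + (t:ℕ) + 1) % p : ℕ)) : ZMod 2)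
        = if t = t₀ then (0:ZMod 2) else 1 := by
      intro t
      rw [parity p (m + (t:ℕ)) hp hodd]; simp only [key t]
    simp only [e] at hsum
    have hsum2 := hsum
    have hsum3 : ∀ t : Fin p, g t * (if t = t₀ then (0:ZMod 2) else 1)
        = g t - (if t = t₀ then g t else 0) := by
      intro t; split_ifs <;> ring
    simp only [hsum3, Finset.sum_sub_distrib, Finset.sum_ite_eq', Finset.mem_univ,
      if_true] at hsum2
    linear_combination -hsum2
  set c := ∑ t : Fin p, g t with hc
  have h0 : ∑ t : Fin p, c * (((t:ℕ) : ZMod 2)) = 0 := by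
    have := Hm 0
    simp only [zero_add] at this
    rw [← this]
    apply Finset.sum_congr rfl
    intro t _
    rw [← hconst t, Nat.mod_eq_of_lt t.isLt]
  rw [← Finset.mul_sum, ← Nat.cast_sum] at h0
  have hval : ∑ t : Fin p, (t : ℕ) = p * (p-1) / 2 := by
    rw [Fin.sum_univ_eq_sum_range (fun i => i), Finset.sum_range_id]
  obtain ⟨k, hk⟩ : ∃ k, p = 4*k+3 := ⟨p/4, by omega⟩
  have hodd2 : (p * (p-1) / 2) % 2 = 1 := by
    subst hk
    have h5 : (4*k+3) * (4*k+3-1) = ((4*k+3)*(2*k+1))*2 := by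
      have : 4*k+3-1 = 4*k+2 := by omega
      rw [this]; ring
    rw [h5, Nat.mul_div_cancel _ (by norm_num)]
    rw [Nat.mul_mod, show (4*k+3)%2 = 1 by omega, show (2*k+1)%2 = 1 by omega]
  have hcast : ((p * (p-1) / 2 : ℕ) : ZMod 2) = 1 := by
    rw [← ZMod.natCast_mod, hodd2]; norm_num
  rw [hval, hcast, mul_one] at h0
  rw [hconst i, h0]

theorem stmt_14 (p : ℕ) (hp : p.Prime) (h4 : p % 4 = 3) :
    Nat.card (AddSubgroup.closure
      {f : ℕ → ZMod 2 | ∃ t < p, f = fun m => (((m + t) % p : ℕ) : ZMod 2)})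
      = 2 ^ p ∧
    Nonempty ((AddSubgroup.closure
      {f : ℕ → ZMod 2 | ∃ t < p, f = fun m => (((m + t) % p : ℕ) : ZMod 2)})
      ≃+ (Fin p → ZMod 2)) := by
  set v : Fin p → (ℕ → ZMod 2) := fun t m => (((m + (t:ℕ)) % p : ℕ) : ZMod 2) with hv
  have hS : {f : ℕ → ZMod 2 | ∃ t < p, f = fun m => (((m + t) % p : ℕ) : ZMod 2)}
      = Set.range v := by
    ext f
    simp only [Set.mem_setOf_eq, Set.mem_range]
    constructor
    · rintro ⟨t, ht, rfl⟩; exact ⟨⟨t, ht⟩, rfl⟩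
    · rintro ⟨t, rfl⟩; exact ⟨t, t.isLt, rfl⟩
  rw [hS]
  have hind := indep p hp h4
  have hmem : ∀ x : ℕ → ZMod 2, x ∈ AddSubgroup.closure (Set.range v)
      ↔ x ∈ Submodule.span (ZMod 2) (Set.range v) := by
    intro x
    constructor
    · intro hx
      have hle : AddSubgroup.closure (Set.range v)
          ≤ (Submodule.span (ZMod 2) (Set.range v)).toAddSubgroup :=
        (AddSubgroup.closure_le _).2 (by
          intro y hy
          exact Submodule.mem_toAddSubgroup _ |>.2 (Submodule.subset_span hy))
      exact (Submodule.mem_toAddSubgroup _).1 (hle hx)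
    · intro hx
      have hle : Submodule.span (ZMod 2) (Set.range v)
          ≤ (AddSubgroup.toZModSubmodule 2) (AddSubgroup.closure (Set.range v)) :=
        Submodule.span_le.2 (by
          intro y hy
          exact (AddSubgroup.mem_toZModSubmodule 2).2 (AddSubgroup.subset_closure hy))
      exact (AddSubgroup.mem_toZModSubmodule 2).1 (hle hx)
  have e1 : (AddSubgroup.closure (Set.range v)) ≃+ (Submodule.span (ZMod 2) (Set.range v)) :=
    { toFun := fun x => ⟨x, (hmem x).1 x.2⟩
      invFun := fun x => ⟨x, (hmem x).2 x.2⟩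
      left_inv := fun x => rfl
      right_inv := fun x => rfl
      map_add' := fun _ _ => rfl }
  have e2 : (Submodule.span (ZMod 2) (Set.range v)) ≃+ (Fin p → ZMod 2) :=
    (hind.linearCombinationEquiv.symm.trans (Finsupp.linearEquivFunOnFinite (ZMod 2) (ZMod 2) (Fin p))).toAddEquiv
  have E := e1.trans e2
  constructor
  · rw [Nat.card_congr E.toEquiv]
    simp [Nat.card_eq_fintype_card]
  · exact ⟨E⟩
end

section
/- Let p ≡ 1 (mod 4) be prime, and let S, T ⊆ {0,…,p−1} be distinct subsets each of size at most (p−1)/2. Then the p-clock sums f(m) = (Σ_{s∈S} ((m+s) mod p)) mod 2 and g(m) = (Σ_{t∈T} ((m+t) mod p)) mod 2 are not equal as functions ℕ → ℤ/2ℤ. -/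
theorem stmt_15 (p : ℕ) (hp : p.Prime) (h4 : p % 4 = 1)
    (S T : Finset ℕ) (hS : S ⊆ Finset.range p) (hT : T ⊆ Finset.range p)
    (hScard : S.card ≤ (p - 1) / 2) (hTcard : T.card ≤ (p - 1) / 2)
    (hST : S ≠ T) :
    ¬ ∀ m : ℕ, (∑ s ∈ S, (m + s) % p) % 2 = (∑ t ∈ T, (m + t) % p) % 2 := by
  intro H
  have hp2 := hp.two_le
  have hp5 : 5 ≤ p := by omega
  have hpodd : p % 2 = 1 := by omega
  -- the symmetric difference
  set D : Finset ℕ := symmDiff S T with hDdef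
  have hDsub : D ⊆ Finset.range p := by
    intro x hx
    rw [hDdef, Finset.mem_symmDiff] at hx
    rcases hx with ⟨h1, _⟩ | ⟨h1, _⟩
    · exact hS h1
    · exact hT h1
  have hDne : D.Nonempty := by
    rw [Finset.nonempty_iff_ne_empty]
    intro h
    exact hST (by simpa [hDdef, symmDiff_eq_bot] using h)
  have hDcard : D.card < p := by
    have h1 : D ⊆ S ∪ T := by
      intro x hx
      rw [hDdef, Finset.mem_symmDiff] at hx
      rcases hx with ⟨h1, _⟩ | ⟨h1, _⟩
      · exact Finset.mem_union_left _ h1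
      · exact Finset.mem_union_right _ h1
    have h2 := Finset.card_le_card h1
    have h3 := Finset.card_union_le S T
    omega
  -- parity of p-1
  have hpm1 : ((p - 1 : ℕ) : ZMod 2) = 0 := by
    have : (p - 1) % 2 = 0 % 2 := by omega
    exact (ZMod.natCast_eq_natCast_iff' _ _ _).mpr this
  -- key fact A : the D-sum is always even
  have hA : ∀ m : ℕ, ((∑ d ∈ D, (m + d) % p : ℕ) : ZMod 2) = 0 := by
    intro m
    have h1 : ((∑ s ∈ S, (m + s) % p : ℕ) : ZMod 2)
        = ((∑ t ∈ T, (m + t) % p : ℕ) : ZMod 2) :=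
      (ZMod.natCast_eq_natCast_iff' _ _ _).mpr (H m)
    have hDeq : D = (S ∪ T) \ (S ∩ T) := by
      rw [hDdef]
      ext x
      simp [Finset.mem_symmDiff, Finset.mem_sdiff, Finset.mem_union, Finset.mem_inter]
      tauto
    have hsub : S ∩ T ⊆ S ∪ T := (Finset.inter_subset_left).trans Finset.subset_union_left
    have h2 : (∑ d ∈ D, (((m + d) % p : ℕ) : ZMod 2))
        = (∑ d ∈ S ∪ T, (((m + d) % p : ℕ) : ZMod 2))
          - (∑ d ∈ S ∩ T, (((m + d) % p : ℕ) : ZMod 2)) := by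
      rw [hDeq, Finset.sum_sdiff_eq_sub hsub]
    have h3 : (∑ d ∈ S ∪ T, (((m + d) % p : ℕ) : ZMod 2))
          + (∑ d ∈ S ∩ T, (((m + d) % p : ℕ) : ZMod 2))
        = (∑ d ∈ S, (((m + d) % p : ℕ) : ZMod 2))
          + (∑ d ∈ T, (((m + d) % p : ℕ) : ZMod 2)) :=
      Finset.sum_union_inter
    push_cast at h1 ⊢
    rw [h2, CharTwo.sub_eq_add, h3, h1, ← two_mul]
    simp [CharTwo.two_eq_zero]
  -- key fact B : card parity + indicator-sum parity vanishes
  have hB : ∀ m : ℕ, (D.card : ZMod 2)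
      + ∑ d ∈ D, (if (m + d) % p = p - 1 then (1 : ZMod 2) else 0) = 0 := by
    intro m
    have h0 := hA m
    have h1 := hA (m + 1)
    have key : ∀ d ∈ D, (((m + 1 + d) % p : ℕ) : ZMod 2)
        = (((m + d) % p : ℕ) : ZMod 2) + 1
          + (if (m + d) % p = p - 1 then (1 : ZMod 2) else 0) := by
      intro d _
      have hstep : (m + 1 + d) % p = ((m + d) % p + 1) % p := by
        conv_lhs => rw [show m + 1 + d = (m + d) + 1 by ring]
        rw [Nat.add_mod (m + d) 1 p, Nat.mod_eq_of_lt (show (1:ℕ) < p by omega)]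
      by_cases hc : (m + d) % p = p - 1
      · rw [hstep, hc, if_pos rfl]
        have : (p - 1 + 1) % p = 0 := by
          rw [show p - 1 + 1 = p by omega, Nat.mod_self]
        rw [this, hpm1]
        simp only [Nat.cast_zero, zero_add]
        decide
      · have hlt : (m + d) % p < p - 1 := by
          have := Nat.mod_lt (m + d) (show 0 < p by omega)
          omega
        rw [hstep, if_neg hc, Nat.mod_eq_of_lt (by omega)]
        push_cast
        ring
    push_cast at h0 h1
    rw [Finset.sum_congr rfl key] at h1
    rw [Finset.sum_add_distrib, Finset.sum_add_distrib, h0] at h1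
    simpa using h1
  -- evaluate the indicator sum at two chosen points
  -- point 1 : some element of D gives indicator-sum 1
  obtain ⟨d0, hd0⟩ := hDne
  have hd0p : d0 < p := Finset.mem_range.mp (hDsub hd0)
  have hind1 : (∑ d ∈ D, (if (p - 1 - d0 + d) % p = p - 1 then (1 : ZMod 2) else 0)) = 1 := by
    rw [Finset.sum_congr rfl (g := fun d => if d = d0 then (1 : ZMod 2) else 0)]
    · rw [Finset.sum_ite_eq' D d0 (fun _ => (1 : ZMod 2))]
      simp [hd0]
    · intro d hd
      have hdp : d < p := Finset.mem_range.mp (hDsub hd)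
      congr 1
      simp only [eq_iff_iff]
      constructor
      · intro h
        rcases Nat.lt_or_ge (p - 1 - d0 + d) p with hlt | hge
        · rw [Nat.mod_eq_of_lt hlt] at h; omega
        · have h2 : (p - 1 - d0 + d) % p = p - 1 - d0 + d - p := by
            rw [Nat.mod_eq_sub_mod hge, Nat.mod_eq_of_lt (by omega)]
          omega
      · intro h
        subst h
        rw [show p - 1 - d + d = p - 1 by omega, Nat.mod_eq_of_lt (by omega)]
  -- point 2 : some non-element gives indicator-sum 0
  have hssub : D ⊂ Finset.range p := by
    refine Finset.ssubset_iff_of_subset hDsub |>.mpr ?_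
    by_contra h
    push_neg at h
    have : Finset.range p ⊆ D := fun x hx => by
      by_contra hxD; exact hxD (h x hx)
    have := Finset.card_le_card this
    simp at this
    omega
  obtain ⟨r, hrP, hrD⟩ := Finset.exists_of_ssubset hssub
  have hrp : r < p := Finset.mem_range.mp hrP
  have hind0 : (∑ d ∈ D, (if (p - 1 - r + d) % p = p - 1 then (1 : ZMod 2) else 0)) = 0 := by
    apply Finset.sum_eq_zero
    intro d hd
    have hdp : d < p := Finset.mem_range.mp (hDsub hd)
    rw [if_neg]
    intro h
    have hdr : d = r := by
      rcases Nat.lt_or_ge (p - 1 - r + d) p with hlt | hge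
      · rw [Nat.mod_eq_of_lt hlt] at h; omega
      · have h2 : (p - 1 - r + d) % p = p - 1 - r + d - p := by
          rw [Nat.mod_eq_sub_mod hge, Nat.mod_eq_of_lt (by omega)]
        omega
    exact hrD (hdr ▸ hd)
  have hB1 := hB (p - 1 - d0)
  have hB0 := hB (p - 1 - r)
  rw [hind1] at hB1
  rw [hind0] at hB0
  rw [add_zero] at hB0
  rw [hB0, zero_add] at hB1
  exact one_ne_zero hB1
end

section
/- Let p ≡ 1 (mod 4) be prime. The subgroup of functions ℕ → ℤ/2ℤ generated by the p projected prime clocks [p,0],…,[p,p−1] has order exactly 2^(p−1), and is isomorphic to (ℤ/2ℤ)^(p−1). -/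
/-!
The clocks are the images of the basis vectors under the `ZMod 2`-linear map
`c ↦ ∑ t, c t • [p,t]` on `Fin p → ZMod 2`, so it suffices to show that its kernel is spanned
by the all-ones vector. That vector is in the kernel because at every `m` the sum of all clocks is
`∑ r < p, r = p (p - 1) / 2`, which is even when `p ≡ 1 (mod 4)`. Conversely, passing from `m` to
`m + 1` every clock goes up by one except the single clock that wraps around from `p - 1`, which is
even, to `0`; adding a kernel relation at `m` and `m + 1` therefore isolates that coefficient as
the sum of all coefficients.
-/

open Finset

theorem Submodule.toAddSubgroup_span_zmod {n : ℕ} {M : Type*} [AddCommGroup M]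
    [Module (ZMod n) M] (s : Set M) : (span (ZMod n) s).toAddSubgroup = AddSubgroup.closure s :=
  le_antisymm
    ((toAddSubgroup_le _ _).2 (span_le.2 AddSubgroup.subset_closure :
      span (ZMod n) s ≤ AddSubgroup.toZModSubmodule n (AddSubgroup.closure s)))
    (AddSubgroup.closure_le _ |>.2 subset_span)

theorem Fin.sub_one_sub_add_mod_eq_sub_one_iff {p : ℕ} {τ t : Fin p} :
    (p - 1 - τ + t) % p = p - 1 ↔ t = τ := by
  have hτ : (p - 1 - τ + τ) % p = p - 1 := by
    have := τ.isLt
    rw [Nat.sub_add_cancel (by omega), Nat.mod_eq_of_lt (by omega)]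
  refine ⟨fun h => Fin.ext ?_, fun h => h ▸ hτ⟩
  have := Nat.ModEq.add_left_cancel' (p - 1 - τ) (h.trans hτ.symm)
  rwa [Nat.ModEq, Nat.mod_eq_of_lt t.isLt, Nat.mod_eq_of_lt τ.isLt] at this

def primeClock (p t : ℕ) : ℕ → ZMod 2 := fun m => (((m + t) % p : ℕ) : ZMod 2)

namespace primeClock

variable {p : ℕ}

theorem apply_succ_add_apply (hp : p % 2 = 1) (t m : ℕ) :
    primeClock p t (m + 1) + primeClock p t m = if (m + t) % p = p - 1 then 0 else 1 := by
  have hpos : 0 < p := by omega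
  have hlt : (m + t) % p < p := Nat.mod_lt _ hpos
  have hshift : (m + 1 + t) % p = ((m + t) % p + 1) % p := by
    rw [Nat.add_right_comm, Nat.mod_add_mod]
  simp only [primeClock, hshift]
  split_ifs with h
  · have hp1 : ((p - 1 : ℕ) : ZMod 2) = 0 := (ZMod.natCast_eq_zero_iff _ 2).2 (by omega)
    rw [h, Nat.sub_add_cancel hpos, Nat.mod_self, hp1, Nat.cast_zero, add_zero]
  · rw [Nat.mod_eq_of_lt (by omega), Nat.cast_succ, add_right_comm, CharTwo.add_self_eq_zero,
      zero_add]

open Fin.NatCast in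
theorem sum_apply_eq_sum_range [NeZero p] (m : ℕ) :
    ∑ t : Fin p, primeClock p t m = ∑ r ∈ range p, (r : ZMod 2) := by
  rw [← Fin.sum_univ_eq_sum_range]
  refine Fintype.sum_equiv (Equiv.addLeft (m : Fin p)) _ _ fun t => ?_
  simp [primeClock, Fin.val_add, Nat.mod_add_mod]

theorem sum_apply_eq_zero (hp : p % 4 = 1) (m : ℕ) : ∑ t : Fin p, primeClock p t m = 0 := by
  have : NeZero p := ⟨by omega⟩
  obtain ⟨k, hk⟩ : ∃ k, p = 4 * k + 1 := ⟨p / 4, by omega⟩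
  have hsum : ∑ r ∈ range p, r = 2 * (p * k) := by
    have := Finset.sum_range_id_mul_two p
    rw [hk, Nat.add_sub_cancel] at this
    rw [hk]; linarith
  rw [sum_apply_eq_sum_range, ← Nat.cast_sum, hsum]
  exact (ZMod.natCast_eq_zero_iff _ 2).2 (dvd_mul_right 2 _)

variable (p) in
def combination : (Fin p → ZMod 2) →ₗ[ZMod 2] (ℕ → ZMod 2) :=
  Fintype.linearCombination (ZMod 2) fun t : Fin p => primeClock p t

theorem combination_apply (c : Fin p → ZMod 2) (m : ℕ) :
    combination p c m = ∑ t, c t * primeClock p t m := by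
  simp [combination, Fintype.linearCombination_apply]

theorem range_combination :
    (LinearMap.range (combination p)).toAddSubgroup =
      AddSubgroup.closure {f | ∃ t < p, f = primeClock p t} := by
  rw [combination, Fintype.range_linearCombination, Submodule.toAddSubgroup_span_zmod]
  congr 1
  ext f
  simp [Fin.exists_iff, eq_comm]

theorem eq_sum_of_mem_ker (hp : p % 2 = 1) {c : Fin p → ZMod 2}
    (hc : c ∈ LinearMap.ker (combination p)) (τ : Fin p) : c τ = ∑ t, c t := by
  have hdiff :
      ∑ t, c t * (primeClock p t (p - 1 - τ + 1) + primeClock p t (p - 1 - τ)) = 0 := by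
    simp only [mul_add, sum_add_distrib, ← combination_apply, LinearMap.mem_ker.1 hc,
      Pi.zero_apply, add_zero]
  simp only [apply_succ_add_apply hp, Fin.sub_one_sub_add_mod_eq_sub_one_iff, mul_ite, mul_zero,
    mul_one, sum_ite, sum_const_zero, filter_ne', mem_univ, sum_erase_eq_sub, zero_add] at hdiff
  exact (sub_eq_zero.1 hdiff).symm

theorem ker_combination (hp : p % 4 = 1) :
    LinearMap.ker (combination p) = Submodule.span (ZMod 2) {fun _ => 1} := by
  refine le_antisymm (fun c hc => ?_) ?_
  · refine Submodule.mem_span_singleton.2 ⟨∑ t, c t, funext fun τ => ?_⟩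
    simp [← eq_sum_of_mem_ker (by omega) hc τ]
  · rw [Submodule.span_le, Set.singleton_subset_iff, SetLike.mem_coe, LinearMap.mem_ker]
    funext m
    simp [combination_apply, sum_apply_eq_zero hp]

theorem finrank_range_combination (hp : p % 4 = 1) :
    Module.finrank (ZMod 2) (LinearMap.range (combination p)) = p - 1 := by
  have hrank := LinearMap.finrank_range_add_finrank_ker (combination p)
  have hone : (fun _ => 1 : Fin p → ZMod 2) ≠ 0 := fun h =>
    one_ne_zero (congrFun h ⟨0, by omega⟩)
  rw [ker_combination hp, finrank_span_singleton hone, Module.finrank_fin_fun] at hrank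
  omega

end primeClock

theorem stmt_17_general (p : ℕ) (h4 : p % 4 = 1) :
    Nat.card (AddSubgroup.closure
      {f : ℕ → ZMod 2 | ∃ t < p, f = fun m => (((m + t) % p : ℕ) : ZMod 2)})
      = 2 ^ (p - 1) ∧
    Nonempty ((AddSubgroup.closure
      {f : ℕ → ZMod 2 | ∃ t < p, f = fun m => (((m + t) % p : ℕ) : ZMod 2)})
      ≃+ (Fin (p - 1) → ZMod 2)) := by
  obtain ⟨e⟩ := FiniteDimensional.nonempty_linearEquiv_of_finrank_eq
    ((primeClock.finrank_range_combination h4).trans (Module.finrank_fin_fun (ZMod 2)).symm)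
  change Nat.card (AddSubgroup.closure {f | ∃ t < p, f = primeClock p t}) = _ ∧
    Nonempty (AddSubgroup.closure {f | ∃ t < p, f = primeClock p t} ≃+ _)
  rw [← primeClock.range_combination]
  refine ⟨(Nat.card_congr e.toEquiv).trans ?_, ⟨e.toAddEquiv⟩⟩
  rw [Nat.card_pi, Finset.prod_const, Nat.card_zmod, Finset.card_univ, Fintype.card_fin]

theorem stmt_17 (p : ℕ) (hp : p.Prime) (h4 : p % 4 = 1) :
    Nat.card (AddSubgroup.closure
      {f : ℕ → ZMod 2 | ∃ t < p, f = fun m => (((m + t) % p : ℕ) : ZMod 2)})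
      = 2 ^ (p - 1) ∧
    Nonempty ((AddSubgroup.closure
      {f : ℕ → ZMod 2 | ∃ t < p, f = fun m => (((m + t) % p : ℕ) : ZMod 2)})
      ≃+ (Fin (p - 1) → ZMod 2)) :=
  stmt_17_general p h4
end

section
/- For every positive integer n and every Boolean function f : {0,1}^n → {0,1}, there exist a finite list of prime clocks [q₁,t₁],…,[q_L,t_L] (qᵢ prime, 0 ≤ tᵢ < qᵢ) such that for every x ∈ {0,1}^n, f(x) = (Σᵢ ((m+tᵢ) mod qᵢ)) mod 2, where m = Σⱼ xⱼ 2^j is the integer encoded by x. -/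
open Finset

private def enc18 {n : ℕ} (x : Fin n → Bool) : ℕ := ∑ j, if x j then 2 ^ (j : ℕ) else 0

private lemma enc18_succ {n : ℕ} (x : Fin (n+1) → Bool) :
    enc18 x = (if x 0 then 1 else 0) + 2 * enc18 (fun j : Fin n => x j.succ) := by
  unfold enc18
  rw [Fin.sum_univ_succ, Finset.mul_sum]
  congr 1
  refine Finset.sum_congr rfl fun j _ => ?_
  rcases h : x j.succ with _ | _ <;> simp [h, pow_succ, mul_comm]

private lemma enc18_lt {n : ℕ} (x : Fin n → Bool) : enc18 x < 2 ^ n := by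
  induction n with
  | zero => simp [enc18]
  | succ n ih =>
    rw [enc18_succ]
    have := ih (fun j : Fin n => x j.succ)
    have h2 : (2:ℕ) ^ (n+1) = 2 * 2 ^ n := by ring
    split_ifs <;> omega

private lemma enc18_inj {n : ℕ} (x y : Fin n → Bool) (h : enc18 x = enc18 y) : x = y := by
  induction n with
  | zero => funext j; exact j.elim0
  | succ n ih =>
    rw [enc18_succ, enc18_succ] at h
    have h0 : x 0 = y 0 := by
      rcases hx : x 0 with _|_ <;> rcases hy : y 0 with _|_ <;> simp [hx, hy] at h ⊢ <;> omega
    have htail : (fun j : Fin n => x j.succ) = (fun j : Fin n => y j.succ) := by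
      apply ih
      rw [h0] at h
      split_ifs at h <;> omega
    funext j
    rcases Fin.eq_zero_or_eq_succ j with rfl | ⟨k, rfl⟩
    · exact h0
    · exact congrFun htail k

private lemma modval18 (p a : ℕ) (hp : 0 < p) (h : a < 2 * p) :
    a % p = if a < p then a else a - p := by
  split_ifs with h'
  · exact Nat.mod_eq_of_lt h'
  · push_neg at h'
    calc a % p = (a - p + p) % p := by rw [Nat.sub_add_cancel h']
      _ = (a - p) % p := Nat.add_mod_right _ _
      _ = a - p := Nat.mod_eq_of_lt (by omega)

private lemma single18 (p N m₀ m : ℕ) (hodd : p % 2 = 1) (hm : m < N) (hm₀ : m₀ < N)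
    (hNp : N < p) :
    (m % p + ((m + 1) % p) + ((m + (if m₀ = 0 then 0 else p - m₀)) % p)
      + ((m + (p - m₀ - 1)) % p)) % 2 = if m = m₀ then 1 else 0 := by
  have hp : 0 < p := by omega
  have ht : (if m₀ = 0 then 0 else p - m₀) < p := by split_ifs <;> omega
  rw [modval18 p m hp (by omega), modval18 p (m+1) hp (by omega),
    modval18 p _ hp (by omega), modval18 p (m + (p - m₀ - 1)) hp (by omega)]
  split_ifs <;> omega

private lemma sum_flatMap18 {α : Type*} (l : List α) (g : α → List ℕ) :
    (l.flatMap g).sum = (l.map (fun a => (g a).sum)).sum := by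
  induction l with
  | nil => simp
  | cons a l ih => simp [List.flatMap_cons, ih]

theorem stmt_18 (n : ℕ) (hn : 0 < n) (f : (Fin n → Bool) → Bool) :
    ∃ L : List (ℕ × ℕ), (∀ qt ∈ L, (qt.1).Prime ∧ qt.2 < qt.1) ∧
      ∀ x : Fin n → Bool,
        (if f x then 1 else 0)
          = (L.map (fun qt =>
              ((∑ j : Fin n, if x j then 2 ^ (j : ℕ) else 0) + qt.2) % qt.1)).sum % 2 := by
  obtain ⟨p, hple, hp⟩ := Nat.exists_infinite_primes (2 ^ n + 1)
  have h2n : 2 ≤ 2 ^ n := by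
    calc 2 = 2 ^ 1 := by norm_num
    _ ≤ 2 ^ n := Nat.pow_le_pow_right (by norm_num) hn
  have hodd : p % 2 = 1 := Nat.odd_iff.mp (hp.odd_of_ne_two (by omega))
  classical
  set S := Finset.univ.filter (fun x : Fin n → Bool => f x = true) with hS
  refine ⟨S.toList.flatMap (fun x => [(p, 0), (p, 1),
      (p, if enc18 x = 0 then 0 else p - enc18 x), (p, p - enc18 x - 1)]), ?_, ?_⟩
  · intro qt hqt
    rw [List.mem_flatMap] at hqt
    obtain ⟨x, _, h⟩ := hqt
    have hx2 : enc18 x < p := lt_of_lt_of_le (enc18_lt x) (by omega)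
    simp only [List.mem_cons, List.not_mem_nil, or_false] at h
    rcases h with rfl | rfl | rfl | rfl <;> refine ⟨hp, ?_⟩ <;> simp <;>
      first
      | omega
      | (split_ifs <;> omega)
  · intro y
    have hy : (∑ j : Fin n, if y j then 2 ^ (j : ℕ) else 0) = enc18 y := rfl
    rw [hy, List.map_flatMap, sum_flatMap18]
    simp only [List.map_cons, List.map_nil, List.sum_cons, List.sum_nil]
    rw [Finset.sum_map_toList, Finset.sum_nat_mod]
    have key : ∀ a ∈ S,
        ((enc18 y + 0) % p + ((enc18 y + 1) % p
          + ((enc18 y + (if enc18 a = 0 then 0 else p - enc18 a)) % p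
          + ((enc18 y + (p - enc18 a - 1)) % p + 0)))) % 2
        = if a = y then 1 else 0 := by
      intro a _
      have h := single18 p (2 ^ n) (enc18 a) (enc18 y) hodd (enc18_lt y) (enc18_lt a)
        (by omega)
      have hiff : (enc18 y = enc18 a) ↔ (a = y) :=
        ⟨fun h => (enc18_inj y a h).symm, fun h => by rw [h]⟩
      rw [if_congr hiff rfl rfl] at h
      rw [← h]
      ring_nf
    rw [Finset.sum_congr rfl key, Finset.sum_ite_eq' S y (fun _ => 1)]
    by_cases hf : f y = true <;> simp [hS, hf]
end

section
/- For every prime p and every binary string c ∈ {0,1}^(p−1), there exists a subset S ⊆ {0,…,p−1} such that for each i with 1 ≤ i ≤ p−1, (Σ_{t∈S} ((i+t) mod p)) mod 2 = c_i. -/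
lemma auxA (p m : ℕ) (h1 : 1 ≤ m) (h2 : m < p) :
    ((m % p : ℕ) : ZMod 2) + (((m + (p-1)) % p : ℕ) : ZMod 2) = 1 := by
  obtain ⟨m', rfl⟩ : ∃ m', m = m' + 1 := ⟨m - 1, by omega⟩
  have e1 : (m' + 1) % p = m' + 1 := Nat.mod_eq_of_lt h2
  have e2 : (m' + 1 + (p-1)) % p = m' := by
    have h : m' + 1 + (p-1) = m' + p := by omega
    rw [h, Nat.add_mod_right, Nat.mod_eq_of_lt (by omega)]
  rw [e1, e2]
  push_cast
  generalize ((m' : ℕ) : ZMod 2) = x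
  revert x; decide

lemma auxB (p s : ℕ) (hp3 : 3 ≤ p) (hodd : p % 2 = 1) (h1 : 1 ≤ s) (h2 : s ≤ 2*p-3) :
    ((s % p : ℕ) : ZMod 2) + (((s+1) % p : ℕ) : ZMod 2) = if s = p-1 then 0 else 1 := by
  rcases lt_trichotomy s (p-1) with h | h | h
  · rw [if_neg (by omega), Nat.mod_eq_of_lt (by omega), Nat.mod_eq_of_lt (by omega)]
    push_cast
    generalize ((s : ℕ) : ZMod 2) = x
    revert x; decide
  · rw [if_pos h, Nat.mod_eq_of_lt (by omega)]
    have : s + 1 = p := by omega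
    rw [this, Nat.mod_self]
    obtain ⟨k, hk⟩ : ∃ k, s = 2*k := ⟨s/2, by omega⟩
    rw [hk]
    push_cast
    generalize ((k : ℕ) : ZMod 2) = x
    revert x; decide
  · rw [if_neg (by omega)]
    have e1 : s % p = s - p := by
      rw [Nat.mod_eq_sub_mod (by omega), Nat.mod_eq_of_lt (by omega)]
    have e2 : (s+1) % p = (s - p) + 1 := by
      rw [Nat.mod_eq_sub_mod (by omega), Nat.mod_eq_of_lt (by omega)]
      omega
    rw [e1, e2]
    push_cast
    generalize ((s - p : ℕ) : ZMod 2) = x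
    revert x; decide

theorem stmt_19 (p : ℕ) (hp : p.Prime) (c : Fin (p - 1) → ZMod 2) :
    ∃ S ⊆ Finset.range p, ∀ i : Fin (p - 1),
      (((∑ t ∈ S, (((i : ℕ) + 1) + t) % p) : ℕ) : ZMod 2) = c i := by
  classical
  rcases eq_or_ne p 2 with rfl | hne
  · -- p = 2
    have hall : ∀ x : ZMod 2, x = 0 ∨ x = 1 := by decide
    have hone : (0:ℕ) < 2 - 1 := by norm_num
    have hieq : ∀ i : Fin (2-1), i = ⟨0, hone⟩ := fun i => Fin.ext (by
      have := i.isLt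
      show (i : ℕ) = 0
      omega)
    rcases hall (c ⟨0, hone⟩) with h | h
    · refine ⟨∅, by simp, fun i => ?_⟩
      rw [hieq i]
      simpa using h.symm
    · refine ⟨{0}, by simp, fun i => ?_⟩
      rw [hieq i]
      simpa using h.symm
  · have hp3 : 3 ≤ p := by have := hp.two_le; omega
    have hodd : p % 2 = 1 := Nat.odd_iff.mp (hp.odd_of_ne_two hne)
    set D : Fin (p-1) → ℕ → ZMod 2 := fun j t =>
      (if t = 0 then 1 else 0) + (if t = p-1 then 1 else 0) +
      (if t = p-2-(j:ℕ) then 1 else 0) + (if t = p-1-(j:ℕ) then 1 else 0) with hD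
    refine ⟨(Finset.range p).filter (fun t => (∑ j : Fin (p-1), c j * D j t) = 1),
      Finset.filter_subset _ _, ?_⟩
    intro i
    set m := (i : ℕ) + 1 with hm
    have him : (i : ℕ) < p - 1 := i.isLt
    set g : ℕ → ZMod 2 := fun t => (((m + t) % p : ℕ) : ZMod 2) with hg
    rw [Nat.cast_sum]
    have step1 : ∑ t ∈ (Finset.range p).filter (fun t => (∑ j : Fin (p-1), c j * D j t) = 1),
        (((m + t) % p : ℕ) : ZMod 2)
        = ∑ t ∈ Finset.range p, (∑ j : Fin (p-1), c j * D j t) * g t := by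
      rw [Finset.sum_filter]
      refine Finset.sum_congr rfl (fun t _ => ?_)
      have hx : ∀ a b : ZMod 2, (if a = 1 then b else 0) = a * b := by decide
      exact hx _ _
    rw [step1]
    have step2 : ∑ t ∈ Finset.range p, (∑ j : Fin (p-1), c j * D j t) * g t
        = ∑ j : Fin (p-1), c j * ∑ t ∈ Finset.range p, D j t * g t := by
      simp_rw [Finset.sum_mul, mul_assoc]
      rw [Finset.sum_comm]
      simp_rw [Finset.mul_sum]
    rw [step2]
    have inner : ∀ j : Fin (p-1), ∑ t ∈ Finset.range p, D j t * g t
        = if j = i then 1 else 0 := by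
      intro j
      have hjlt : (j : ℕ) < p - 1 := j.isLt
      have e1 : ∑ t ∈ Finset.range p, D j t * g t
          = g 0 + g (p-1) + g (p-2-(j:ℕ)) + g (p-1-(j:ℕ)) := by
        simp only [hD, add_mul, Finset.sum_add_distrib, ite_mul, one_mul, zero_mul,
          Finset.sum_ite_eq', Finset.mem_range]
        rw [if_pos (by omega), if_pos (by omega), if_pos (by omega), if_pos (by omega)]
      rw [e1]
      have hA : g 0 + g (p-1) = 1 := by
        have := auxA p m (by omega) (by omega)
        simpa [hg] using this
      have hB : g (p-2-(j:ℕ)) + g (p-1-(j:ℕ)) = if j = i then 0 else 1 := by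
        have hs : m + (p-1-(j:ℕ)) = (m + (p-2-(j:ℕ))) + 1 := by omega
        have := auxB p (m + (p-2-(j:ℕ))) hp3 hodd (by omega) (by omega)
        have hiff : (m + (p-2-(j:ℕ)) = p - 1) ↔ j = i := by
          rw [Fin.ext_iff]; omega
        simp only [hg]
        rw [hs, this, if_congr hiff rfl rfl]
      calc g 0 + g (p-1) + g (p-2-(j:ℕ)) + g (p-1-(j:ℕ))
          = (g 0 + g (p-1)) + (g (p-2-(j:ℕ)) + g (p-1-(j:ℕ))) := by ring
        _ = 1 + (if j = i then 0 else 1) := by rw [hA, hB]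
        _ = if j = i then 1 else 0 := by split <;> decide
    simp_rw [inner, mul_ite, mul_one, mul_zero]
    simp
end
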